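/- Let u ∈ ℝ^p be fixed, let a_1, ..., a_n be i.i.d. random vectors in {0,1}^p with i.i.d. Bernoulli(q) entries, and define Δ_j := (1/√n) Σ_{i=1}^n [ (1/(q(1-q))) e_j^T(a_i - q1)(a_i - q1)^T u - u_j ]. Then there is a constant C(q) depending only on q such that with probability at least 1 - p^{-3}, max_{j ∈ [p]} |Δ_j| ≤ C(q) ‖u‖₂ √(log p), provided n ≥ log p. -/

import Mathlib

open MeasureTheory ProbabilityTheory
open scoped NNReal ENNReal

/-- The Bernoulli(q) distribution on `ℝ`, taking value `1` with probability `q`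
and `0` with probability `1 - q`. -/
noncomputable def bernoulliReal (q : ℝ) : Measure ℝ :=
  ENNReal.ofReal q • Measure.dirac (1 : ℝ) + ENNReal.ofReal (1 - q) • Measure.dirac (0 : ℝ)

section helpers

lemma twoPoint_mgf_le {w α β R s : ℝ} (hw0 : 0 ≤ w) (hw1 : w ≤ 1)
    (hα : |α| ≤ R) (hβ : |β| ≤ R) (hcen : w * α + (1 - w) * β = 0) :
    w * Real.exp (s * α) + (1 - w) * Real.exp (s * β) ≤ Real.exp (s ^ 2 * R ^ 2 / 2) := by
  have hR0 : 0 ≤ R := le_trans (abs_nonneg α) hα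
  rcases eq_or_lt_of_le hR0 with hR | hR
  · have hα0 : α = 0 := abs_eq_zero.mp (le_antisymm (hR ▸ hα) (abs_nonneg α))
    have hβ0 : β = 0 := abs_eq_zero.mp (le_antisymm (hR ▸ hβ) (abs_nonneg β))
    simp only [hα0, hβ0, mul_zero, Real.exp_zero, mul_one]
    have h : w + (1 - w) = 1 := by ring
    rw [h]
    exact Real.one_le_exp (by positivity)
  · have key : ∀ x : ℝ, |x| ≤ R → Real.exp (s * x) ≤
        ((R + x) / (2 * R)) * Real.exp (s * R) + ((R - x) / (2 * R)) * Real.exp (-(s * R)) := by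
      intro x hx
      rw [abs_le] at hx
      have h1 : (0:ℝ) ≤ (R + x) / (2 * R) := div_nonneg (by linarith) (by linarith)
      have h2 : (0:ℝ) ≤ (R - x) / (2 * R) := div_nonneg (by linarith) (by linarith)
      have h3 : (R + x) / (2 * R) + (R - x) / (2 * R) = 1 := by field_simp; ring
      have h4 := convexOn_exp.2 (Set.mem_univ (s * R)) (Set.mem_univ (-(s * R))) h1 h2 h3
      simp only [smul_eq_mul] at h4
      have harg : (R + x) / (2 * R) * (s * R) + (R - x) / (2 * R) * (-(s * R)) = s * x := by
        field_simp; ring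
      rwa [harg] at h4
    have hA := key α hα
    have hB := key β hβ
    calc w * Real.exp (s * α) + (1 - w) * Real.exp (s * β)
        ≤ w * (((R + α) / (2 * R)) * Real.exp (s * R) + ((R - α) / (2 * R)) * Real.exp (-(s * R)))
          + (1 - w) * (((R + β) / (2 * R)) * Real.exp (s * R) + ((R - β) / (2 * R)) * Real.exp (-(s * R))) :=
          add_le_add (mul_le_mul_of_nonneg_left hA hw0) (mul_le_mul_of_nonneg_left hB (by linarith))
      _ = (Real.exp (s * R) + Real.exp (-(s * R))) / 2 := by
          simp only [add_div, sub_div, show R / (2 * R) = 1 / 2 by field_simp]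
          linear_combination (Real.exp (s * R) - Real.exp (-(s * R))) / (2 * R) * hcen
      _ = Real.cosh (s * R) := (Real.cosh_eq _).symm
      _ ≤ Real.exp ((s * R) ^ 2 / 2) := Real.cosh_le_exp_half_sq _
      _ = Real.exp (s ^ 2 * R ^ 2 / 2) := by ring_nf

lemma integrable_dirac' {f : ℝ → ℝ} (a : ℝ) : Integrable f (Measure.dirac a) := by
  have h : f =ᵐ[Measure.dirac a] (fun _ => f a) := by
    rw [Filter.EventuallyEq, MeasureTheory.ae_dirac_eq]
    exact Filter.eventually_pure.mpr rfl
  exact (integrable_const (f a)).congr h.symm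

lemma integral_bernoulliReal {q : ℝ} (hq0 : 0 ≤ q) (hq1 : q ≤ 1) (g : ℝ → ℝ) :
    ∫ x, g x ∂(bernoulliReal q) = q * g 1 + (1 - q) * g 0 := by
  rw [bernoulliReal, integral_add_measure
      ((integrable_dirac' 1).smul_measure ENNReal.ofReal_ne_top)
      ((integrable_dirac' 0).smul_measure ENNReal.ofReal_ne_top),
    integral_smul_measure, integral_smul_measure, integral_dirac, integral_dirac,
    ENNReal.toReal_ofReal hq0, ENNReal.toReal_ofReal (by linarith)]
  simp [smul_eq_mul]

lemma bernoulliReal_compl_zero {q : ℝ} :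
    bernoulliReal q ({0, 1} : Set ℝ)ᶜ = 0 := by
  have h : MeasurableSet (({0, 1} : Set ℝ)ᶜ) :=
    (MeasurableSet.insert (measurableSet_singleton 1) 0).compl
  rw [bernoulliReal, Measure.add_apply, Measure.smul_apply, Measure.smul_apply,
    Measure.dirac_apply' _ h, Measure.dirac_apply' _ h]
  simp

lemma sq_scale_le {x v m : ℝ} (hv : |v| ≤ 1) (hm : 0 ≤ m) :
    (x * v) ^ 2 * m / 2 ≤ x ^ 2 * m / 2 := by
  obtain ⟨h1, h2⟩ := abs_le.mp hv
  have h3 : v ^ 2 ≤ 1 := by nlinarith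
  nlinarith [mul_nonneg (mul_nonneg (sq_nonneg x) hm) (sub_nonneg.mpr h3)]

end helpers

set_option maxHeartbeats 1000000 in
/-- Bernstein-type bound for the remainder term of the debiased LASSO: for fixed `u ∈ ℝᵖ`
and i.i.d. Bernoulli(q) design entries, with
`Δ_j = (1/√n) ∑_i [(1/(q(1-q))) e_jᵀ(a_i - q1)(a_i - q1)ᵀu - u_j]`, there is a constant
`C(q) > 0` such that with probability at least `1 - p⁻³`,
`max_j |Δ_j| ≤ C(q)‖u‖₂√(log p)`, provided `n ≥ log p`. -/
theorem remainder_term_bound (q : ℝ) (hq : q ∈ Set.Ioo (0 : ℝ) 1) :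
    ∃ C : ℝ, 0 < C ∧
      ∀ {Ω : Type} [MeasurableSpace Ω] (Pr : Measure Ω) [IsProbabilityMeasure Pr]
        (n p : ℕ) (hp : 2 ≤ p) (hnp : Real.log p ≤ (n : ℝ)) (u : Fin p → ℝ)
        (a : Fin n × Fin p → Ω → ℝ),
        (∀ ij, Measurable (a ij)) →
        iIndepFun a Pr →
        (∀ ij, Measure.map (a ij) Pr = bernoulliReal q) →
        ∀ Δ : Fin p → Ω → ℝ,
        (∀ j ω, Δ j ω = (1 / Real.sqrt n) * ∑ i : Fin n,
          ((1 / (q * (1 - q))) * (a (i, j) ω - q) * (∑ k, (a (i, k) ω - q) * u k) - u j)) →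
        ENNReal.ofReal (1 - ((p : ℝ) ^ 3)⁻¹)
          ≤ Pr {ω | ∀ j, |Δ j ω|
              ≤ C * Real.sqrt (∑ k, u k ^ 2) * Real.sqrt (Real.log p)} := by
  classical
  obtain ⟨hq0, hq1⟩ := hq
  set c : ℝ := 1 / (q * (1 - q)) with hc_def
  have hqd : 0 < q * (1 - q) := by nlinarith
  have hc : 0 < c := by positivity
  refine ⟨6 * c, by positivity, ?_⟩
  intro Ω _ Pr _ n p hp hnp u a hameas hIndep hdist Δ hΔ
  set C : ℝ := 6 * c with hC_def
  -- basic facts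
  have hp1 : (1:ℝ) < (p:ℝ) := by exact_mod_cast Nat.lt_of_lt_of_le one_lt_two hp
  have hp0 : (0:ℝ) < (p:ℝ) := by linarith
  have hlogp : 0 < Real.log p := Real.log_pos hp1
  have hn0 : (0:ℝ) < (n:ℝ) := lt_of_lt_of_le hlogp hnp
  set U : ℝ := ∑ k, u k ^ 2 with hU_def
  have hU0 : 0 ≤ U := Finset.sum_nonneg fun k _ => sq_nonneg _
  set tval : ℝ := C * Real.sqrt U * Real.sqrt (Real.log p) with htval_def
  -- the summands
  set W : Fin n → Fin p → Ω → ℝ := fun i j ω =>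
    (1 / (q * (1 - q))) * (a (i, j) ω - q) * (∑ k, (a (i, k) ω - q) * u k) - u j with hW_def
  have hWmeas : ∀ i j, Measurable (W i j) := by
    intro i j
    apply Measurable.sub _ measurable_const
    exact (((hameas (i, j)).sub measurable_const).const_mul _).mul
      (Finset.measurable_sum _ fun k _ => ((hameas (i, k)).sub measurable_const).mul_const _)
  have hΔmeas : ∀ j, Measurable (Δ j) := by
    intro j
    have h : Δ j = fun ω => (1 / Real.sqrt n) * ∑ i : Fin n, W i j ω := funext fun ω => hΔ j ω
    rw [h]
    exact (Finset.measurable_sum _ fun i _ => hWmeas i j).const_mul _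
  have hEmeas : MeasurableSet {ω | ∀ j, |Δ j ω| ≤ tval} := by
    rw [Set.setOf_forall]
    exact MeasurableSet.iInter fun j => measurableSet_le (hΔmeas j).abs measurable_const
  -- a.e. the entries are 0 or 1
  have hae : ∀ᵐ ω ∂Pr, ∀ ij : Fin n × Fin p, a ij ω = 0 ∨ a ij ω = 1 := by
    rw [MeasureTheory.ae_all_iff]
    intro ij
    rw [ae_iff]
    have h1 : Pr ((a ij) ⁻¹' ({0, 1} : Set ℝ)ᶜ) = 0 := by
      rw [← Measure.map_apply (hameas ij)
        ((MeasurableSet.insert (measurableSet_singleton 1) 0).compl), hdist ij,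
        bernoulliReal_compl_zero]
    convert h1 using 2
    ext ω; simp
  -- trivial case: u = 0
  rcases eq_or_lt_of_le hU0 with hUzero | hUpos
  · have hu0 : ∀ k, u k = 0 := by
      intro k
      have h := (Finset.sum_eq_zero_iff_of_nonneg (fun k _ => sq_nonneg (u k))).mp
        hUzero.symm k (Finset.mem_univ k)
      exact sq_eq_zero_iff.mp h
    have hset : {ω | ∀ j, |Δ j ω| ≤ tval} = Set.univ := by
      apply Set.eq_univ_iff_forall.mpr
      intro ω j
      have hΔ0 : Δ j ω = 0 := by
        rw [hΔ j ω]
        have h2 : ∀ i : Fin n, (1 / (q * (1 - q))) * (a (i, j) ω - q) *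
            (∑ k, (a (i, k) ω - q) * u k) - u j = 0 := by
          intro i
          simp [hu0]
        rw [Finset.sum_congr rfl fun i _ => h2 i]
        simp
      rw [hΔ0]
      have h3 : tval = 0 := by
        rw [htval_def, ← hUzero]
        simp
      rw [h3]
      simp
    rw [hset]
    simp only [measure_univ]
    exact ENNReal.ofReal_le_one.mpr (by
      have h4 : (0:ℝ) ≤ ((p : ℝ) ^ 3)⁻¹ := by positivity
      linarith)
  · -- main case: U > 0
    set S : Fin p → Ω → ℝ := fun j ω => ∑ i : Fin n, W i j ω with hS_def
    have hSmeas : ∀ j, Measurable (S j) := fun j => Finset.measurable_sum _ fun i _ => hWmeas i j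
    have hrn : 0 < Real.sqrt n := Real.sqrt_pos.mpr hn0
    have hc1 : c * (q * (1 - q)) = 1 := by
      rw [hc_def]
      field_simp
    have hmgfW : ∀ (i : Fin n) (j : Fin p) (l : ℝ),
        mgf (W i j) Pr l ≤ Real.exp (l ^ 2 * c ^ 2 * U / 2) := by
      intro i j l
      set V : Fin n × Fin p → Ω → ℝ := fun ik ω => (a ik ω - q) * u ik.2 with hV_def
      have hVmeas : ∀ ik, Measurable (V ik) := fun ik =>
        ((hameas ik).sub measurable_const).mul_const _
      have hVindep : iIndepFun V Pr :=
        hIndep.comp (fun ik => fun x : ℝ => (x - q) * u ik.2)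
          (fun ik => (measurable_id.sub measurable_const).mul_const _)
      set Z : Ω → ℝ := fun ω => ∑ k ∈ Finset.univ.erase j, (a (i, k) ω - q) * u k with hZ_def
      have hZmeas : Measurable Z := Finset.measurable_sum _ fun k _ =>
        ((hameas _).sub measurable_const).mul_const _
      set M : ℝ := ∑ k ∈ Finset.univ.erase j, u k ^ 2 with hM_def
      have hMU : M + u j ^ 2 = U := by
        rw [hM_def, hU_def]
        exact Finset.sum_erase_add _ _ (Finset.mem_univ j)
      have hM0 : 0 ≤ M := Finset.sum_nonneg fun k _ => sq_nonneg _
      have hinj : ∀ x ∈ Finset.univ.erase j, ∀ y ∈ Finset.univ.erase j,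
          (fun k => ((i, k) : Fin n × Fin p)) x = (fun k => ((i, k) : Fin n × Fin p)) y → x = y :=
        fun x _ y _ h => by injection h
      -- mgf of Z
      have hmgfZ : ∀ s' : ℝ, mgf Z Pr s' ≤ Real.exp (s' ^ 2 * M / 2) := by
        intro s'
        have hZeq : Z = ∑ ik ∈ (Finset.univ.erase j).image (fun k => (i, k)), V ik := by
          funext ω
          rw [Finset.sum_apply, Finset.sum_image hinj]
        have hVone : ∀ k : Fin p, mgf (V (i, k)) Pr s' ≤ Real.exp (s' ^ 2 * u k ^ 2 / 2) := by
          intro k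
          have hchg : mgf (V (i, k)) Pr s'
              = ∫ x, Real.exp (s' * ((x - q) * u k)) ∂(Measure.map (a (i, k)) Pr) := by
            rw [mgf, integral_map (hameas _).aemeasurable
              (Continuous.aestronglyMeasurable (by fun_prop))]
          rw [hchg, hdist, integral_bernoulliReal hq0.le hq1.le]
          have h2p := twoPoint_mgf_le (w := q) (α := 1 - q) (β := -q) (R := 1) (s := s' * u k)
            hq0.le hq1.le (by rw [abs_le]; constructor <;> linarith)
            (by rw [abs_le]; constructor <;> linarith) (by ring)
          calc q * Real.exp (s' * ((1 - q) * u k)) + (1 - q) * Real.exp (s' * ((0 - q) * u k))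
              = q * Real.exp ((s' * u k) * (1 - q)) + (1 - q) * Real.exp ((s' * u k) * (-q)) := by
                ring_nf
            _ ≤ Real.exp ((s' * u k) ^ 2 * 1 ^ 2 / 2) := h2p
            _ = Real.exp (s' ^ 2 * u k ^ 2 / 2) := by ring_nf
        rw [hZeq, hVindep.mgf_sum hVmeas, Finset.prod_image hinj]
        calc ∏ k ∈ Finset.univ.erase j, mgf (V (i, k)) Pr s'
            ≤ ∏ k ∈ Finset.univ.erase j, Real.exp (s' ^ 2 * u k ^ 2 / 2) :=
              Finset.prod_le_prod (fun k _ => mgf_nonneg) (fun k _ => hVone k)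
          _ = Real.exp (∑ k ∈ Finset.univ.erase j, s' ^ 2 * u k ^ 2 / 2) :=
              (Real.exp_sum _ _).symm
          _ = Real.exp (s' ^ 2 * M / 2) := by
              congr 1
              rw [hM_def, Finset.mul_sum, Finset.sum_div]
      -- independence of the (i,j) entry and Z
      have hjT : ((i, j) : Fin n × Fin p) ∉ (Finset.univ.erase j).image (fun k => (i, k)) := by
        simp only [Finset.mem_image, Finset.mem_erase]
        rintro ⟨k, ⟨hk, -⟩, he⟩
        exact hk (by injection he with h1 h2)
      have hST2 : Disjoint ({((i, j) : Fin n × Fin p)} : Finset (Fin n × Fin p))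
          ((Finset.univ.erase j).image (fun k => (i, k))) :=
        Finset.disjoint_singleton_left.mpr hjT
      have base2 := hIndep.indepFun_finset _ _ hST2 hameas
      set φ2 : (∀ _ : {x // x ∈ ({((i, j) : Fin n × Fin p)} : Finset (Fin n × Fin p))}, ℝ) → ℝ :=
        fun v => v ⟨(i, j), Finset.mem_singleton_self _⟩ with hφ2_def
      set ψ2 : (∀ _ : {x // x ∈ (Finset.univ.erase j).image
          (fun k => ((i, k) : Fin n × Fin p))}, ℝ) → ℝ :=
        fun v => ∑ k ∈ (Finset.univ.erase j).attach,
          (v ⟨(i, k.1), Finset.mem_image_of_mem _ k.2⟩ - q) * u k.1 with hψ2_def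
      have hφ2meas : Measurable φ2 := measurable_pi_apply _
      have hψ2meas : Measurable ψ2 := Finset.measurable_sum _ fun k _ =>
        ((measurable_pi_apply _).sub measurable_const).mul_const _
      have hcomp2 := base2.comp hφ2meas hψ2meas
      have he1' : (φ2 ∘ fun ω (x : {x // x ∈ ({((i, j) : Fin n × Fin p)} :
          Finset (Fin n × Fin p))}) => a x ω) = a (i, j) := rfl
      have he2' : (ψ2 ∘ fun ω (x : {x // x ∈ (Finset.univ.erase j).image
          (fun k => ((i, k) : Fin n × Fin p))}) => a x ω) = Z := by
        funext ω
        simp only [Function.comp_apply, hψ2_def]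
        exact Finset.sum_attach (Finset.univ.erase j) (fun k => (a (i, k) ω - q) * u k)
      rw [he1', he2'] at hcomp2
      -- expectations of the Bernoulli entry
      have hEb : ∫ ω, a (i, j) ω ∂Pr = q := by
        have h := integral_map (μ := Pr) (φ := a (i, j)) (hameas (i, j)).aemeasurable
          (f := fun x : ℝ => x) measurable_id.aestronglyMeasurable
        rw [hdist, integral_bernoulliReal hq0.le hq1.le (fun x => x)] at h
        rw [← h]
        ring
      have hEb' : ∫ ω, (1 - a (i, j) ω) ∂Pr = 1 - q := by
        have h := integral_map (μ := Pr) (φ := a (i, j)) (hameas (i, j)).aemeasurable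
          (f := fun x : ℝ => 1 - x) (measurable_const.sub measurable_id).aestronglyMeasurable
        rw [hdist, integral_bernoulliReal hq0.le hq1.le (fun x => 1 - x)] at h
        rw [← h]
        ring
      -- a.e. bound on Z and integrability of the products
      have hZbound : ∀ᵐ ω ∂Pr, |Z ω| ≤ ∑ k, |u k| := by
        filter_upwards [hae] with ω hω
        have haq : ∀ k : Fin p, |a (i, k) ω - q| ≤ 1 := by
          intro k
          rcases hω (i, k) with h | h <;> rw [h] <;> rw [abs_le] <;> constructor <;> linarith
        calc |Z ω| ≤ ∑ k ∈ Finset.univ.erase j, |(a (i, k) ω - q) * u k| :=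
              Finset.abs_sum_le_sum_abs _ _
          _ ≤ ∑ k ∈ Finset.univ.erase j, |u k| := Finset.sum_le_sum fun k _ => by
              rw [abs_mul]
              calc |a (i, k) ω - q| * |u k| ≤ 1 * |u k| :=
                    mul_le_mul_of_nonneg_right (haq k) (abs_nonneg _)
                _ = |u k| := one_mul _
          _ ≤ ∑ k, |u k| := Finset.sum_le_sum_of_subset_of_nonneg
              (Finset.subset_univ _) (fun k _ _ => abs_nonneg _)
      have hint1 : ∀ s' : ℝ, Integrable (fun ω => a (i, j) ω * Real.exp (s' * Z ω)) Pr := by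
        intro s'
        apply Integrable.mono' (integrable_const (Real.exp (|s'| * ∑ k, |u k|)))
          (((hameas (i, j)).mul ((hZmeas.const_mul s').exp)).aestronglyMeasurable)
        filter_upwards [hae, hZbound] with ω hω hZb
        rw [Real.norm_eq_abs, Pi.mul_apply, abs_mul, Real.abs_exp]
        have ha01 : |a (i, j) ω| ≤ 1 := by
          rcases hω (i, j) with h | h <;> rw [h] <;> simp
        calc |a (i, j) ω| * Real.exp (s' * Z ω) ≤ 1 * Real.exp (|s'| * ∑ k, |u k|) := by
              apply mul_le_mul ha01 _ (Real.exp_nonneg _) zero_le_one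
              apply Real.exp_le_exp.mpr
              calc s' * Z ω ≤ |s' * Z ω| := le_abs_self _
                _ = |s'| * |Z ω| := abs_mul _ _
                _ ≤ |s'| * ∑ k, |u k| := mul_le_mul_of_nonneg_left hZb (abs_nonneg _)
          _ = Real.exp (|s'| * ∑ k, |u k|) := one_mul _
      have hint2 : ∀ s' : ℝ,
          Integrable (fun ω => (1 - a (i, j) ω) * Real.exp (s' * Z ω)) Pr := by
        intro s'
        apply Integrable.mono' (integrable_const (Real.exp (|s'| * ∑ k, |u k|)))
          (((measurable_const.sub (hameas (i, j))).mul
            ((hZmeas.const_mul s').exp)).aestronglyMeasurable)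
        filter_upwards [hae, hZbound] with ω hω hZb
        rw [Real.norm_eq_abs, Pi.mul_apply, abs_mul, Real.abs_exp]
        have ha01 : |1 - a (i, j) ω| ≤ 1 := by
          rcases hω (i, j) with h | h <;> rw [h] <;> simp
        calc |1 - a (i, j) ω| * Real.exp (s' * Z ω) ≤ 1 * Real.exp (|s'| * ∑ k, |u k|) := by
              apply mul_le_mul ha01 _ (Real.exp_nonneg _) zero_le_one
              apply Real.exp_le_exp.mpr
              calc s' * Z ω ≤ |s' * Z ω| := le_abs_self _
                _ = |s'| * |Z ω| := abs_mul _ _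
                _ ≤ |s'| * ∑ k, |u k| := mul_le_mul_of_nonneg_left hZb (abs_nonneg _)
          _ = Real.exp (|s'| * ∑ k, |u k|) := one_mul _
      -- pointwise decomposition
      have hdecomp : (fun ω => Real.exp (l * W i j ω)) =ᵐ[Pr]
          fun ω => Real.exp (l * ((c * (1 - q) ^ 2 - 1) * u j)) *
              (a (i, j) ω * Real.exp ((l * c * (1 - q)) * Z ω))
            + Real.exp (l * ((c * q ^ 2 - 1) * u j)) *
              ((1 - a (i, j) ω) * Real.exp ((-(l * c * q)) * Z ω)) := by
        filter_upwards [hae] with ω hω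
        have hsplit : (∑ k, (a (i, k) ω - q) * u k) = (a (i, j) ω - q) * u j + Z ω :=
          (Finset.add_sum_erase Finset.univ (fun k => (a (i, k) ω - q) * u k)
            (Finset.mem_univ j)).symm
        simp only [hW_def]
        rw [hsplit]
        rcases hω (i, j) with h0 | h1
        · rw [h0]
          simp only [zero_mul, mul_zero, zero_add, sub_zero, one_mul]
          rw [← Real.exp_add]
          congr 1
          rw [← hc_def]
          ring
        · rw [h1]
          simp only [sub_self, zero_mul, mul_zero, add_zero, one_mul]
          rw [← Real.exp_add]
          congr 1
          rw [← hc_def]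
          ring
      -- compute the mgf
      have hIF1 : IndepFun (a (i, j))
          (fun ω => Real.exp ((l * c * (1 - q)) * Z ω)) Pr :=
        hcomp2.comp measurable_id ((measurable_id.const_mul _).exp)
      have hIF2 : IndepFun (fun ω => 1 - a (i, j) ω)
          (fun ω => Real.exp ((-(l * c * q)) * Z ω)) Pr :=
        hcomp2.comp (measurable_const.sub measurable_id) ((measurable_id.const_mul _).exp)
      have hmul1 : ∫ ω, a (i, j) ω * Real.exp ((l * c * (1 - q)) * Z ω) ∂Pr
          = q * mgf Z Pr (l * c * (1 - q)) := by
        rw [hIF1.integral_fun_mul_eq_mul_integral (hameas (i, j)).aestronglyMeasurable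
          ((hZmeas.const_mul _).exp.aestronglyMeasurable), hEb]
        rfl
      have hmul2 : ∫ ω, (1 - a (i, j) ω) * Real.exp ((-(l * c * q)) * Z ω) ∂Pr
          = (1 - q) * mgf Z Pr (-(l * c * q)) := by
        rw [hIF2.integral_fun_mul_eq_mul_integral ((measurable_const.sub (hameas (i, j))).aestronglyMeasurable)
          ((hZmeas.const_mul _).exp.aestronglyMeasurable), hEb']
        rfl
      have hmgf_eq : mgf (W i j) Pr l
          = Real.exp (l * ((c * (1 - q) ^ 2 - 1) * u j)) * (q * mgf Z Pr (l * c * (1 - q)))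
            + Real.exp (l * ((c * q ^ 2 - 1) * u j)) *
              ((1 - q) * mgf Z Pr (-(l * c * q))) := by
        rw [mgf, integral_congr_ae hdecomp,
          integral_add ((hint1 _).const_mul _) ((hint2 _).const_mul _),
          integral_const_mul, integral_const_mul, hmul1, hmul2]
      rw [hmgf_eq]
      -- final bound
      have hZ1 : mgf Z Pr (l * c * (1 - q)) ≤ Real.exp (l ^ 2 * c ^ 2 * M / 2) := by
        refine le_trans (hmgfZ _) (Real.exp_le_exp.mpr ?_)
        have h9 := sq_scale_le (x := l * c) (v := 1 - q)
          (by rw [abs_le]; constructor <;> linarith) hM0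
        calc (l * c * (1 - q)) ^ 2 * M / 2 ≤ (l * c) ^ 2 * M / 2 := h9
          _ = l ^ 2 * c ^ 2 * M / 2 := by ring
      have hZ0 : mgf Z Pr (-(l * c * q)) ≤ Real.exp (l ^ 2 * c ^ 2 * M / 2) := by
        refine le_trans (hmgfZ _) (Real.exp_le_exp.mpr ?_)
        have h9 := sq_scale_le (x := l * c) (v := q)
          (by rw [abs_le]; constructor <;> linarith) hM0
        calc (-(l * c * q)) ^ 2 * M / 2 = (l * c * q) ^ 2 * M / 2 := by ring
          _ ≤ (l * c) ^ 2 * M / 2 := h9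
          _ = l ^ 2 * c ^ 2 * M / 2 := by ring
      have hα : |c * (1 - q) ^ 2 - 1| ≤ c := by
        have hrepr : c * (1 - q) ^ 2 - 1 = c * ((1 - q) * (1 - 2 * q)) := by
          linear_combination hc1
        rw [hrepr, abs_mul, abs_of_pos hc]
        have habs : |(1 - q) * (1 - 2 * q)| ≤ 1 := by
          rw [abs_le]
          constructor <;> nlinarith
        nlinarith [habs, hc]
      have hβ : |c * q ^ 2 - 1| ≤ c := by
        have hrepr : c * q ^ 2 - 1 = c * (q * (2 * q - 1)) := by
          linear_combination hc1
        rw [hrepr, abs_mul, abs_of_pos hc]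
        have habs : |q * (2 * q - 1)| ≤ 1 := by
          rw [abs_le]
          constructor <;> nlinarith
        nlinarith [habs, hc]
      have hcen : q * (c * (1 - q) ^ 2 - 1) + (1 - q) * (c * q ^ 2 - 1) = 0 := by
        linear_combination hc1
      have htwo := twoPoint_mgf_le (w := q) (α := c * (1 - q) ^ 2 - 1) (β := c * q ^ 2 - 1)
        (R := c) (s := l * u j) hq0.le hq1.le hα hβ hcen
      calc Real.exp (l * ((c * (1 - q) ^ 2 - 1) * u j)) * (q * mgf Z Pr (l * c * (1 - q)))
            + Real.exp (l * ((c * q ^ 2 - 1) * u j)) * ((1 - q) * mgf Z Pr (-(l * c * q)))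
          ≤ Real.exp (l * ((c * (1 - q) ^ 2 - 1) * u j)) *
              (q * Real.exp (l ^ 2 * c ^ 2 * M / 2))
            + Real.exp (l * ((c * q ^ 2 - 1) * u j)) *
              ((1 - q) * Real.exp (l ^ 2 * c ^ 2 * M / 2)) := by
            apply add_le_add
            · exact mul_le_mul_of_nonneg_left
                (mul_le_mul_of_nonneg_left hZ1 hq0.le) (Real.exp_nonneg _)
            · exact mul_le_mul_of_nonneg_left
                (mul_le_mul_of_nonneg_left hZ0 (by linarith)) (Real.exp_nonneg _)
        _ = (q * Real.exp ((l * u j) * (c * (1 - q) ^ 2 - 1))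
              + (1 - q) * Real.exp ((l * u j) * (c * q ^ 2 - 1)))
            * Real.exp (l ^ 2 * c ^ 2 * M / 2) := by
            rw [show l * ((c * (1 - q) ^ 2 - 1) * u j) = (l * u j) * (c * (1 - q) ^ 2 - 1)
              by ring, show l * ((c * q ^ 2 - 1) * u j) = (l * u j) * (c * q ^ 2 - 1) by ring]
            ring
        _ ≤ Real.exp ((l * u j) ^ 2 * c ^ 2 / 2) * Real.exp (l ^ 2 * c ^ 2 * M / 2) :=
            mul_le_mul_of_nonneg_right htwo (Real.exp_nonneg _)
        _ = Real.exp (l ^ 2 * c ^ 2 * U / 2) := by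
            rw [← Real.exp_add]
            congr 1
            rw [← hMU]
            ring
    have hmgfS : ∀ (j : Fin p) (l : ℝ) (s : Finset (Fin n)),
        mgf (fun ω => ∑ i ∈ s, W i j ω) Pr l ≤ Real.exp (s.card * (l ^ 2 * c ^ 2 * U / 2)) := by
      intro j l s
      induction s using Finset.induction_on with
      | empty =>
          simp only [Finset.sum_empty, Finset.card_empty, Nat.cast_zero, zero_mul,
            Real.exp_zero]
          rw [show (fun (_ : Ω) => (0:ℝ)) = (fun (_ : Ω) => (0:ℝ)) from rfl, mgf_const]
          simp
      | @insert i0 s0 hnm ih =>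
          have hmemS : ∀ k : Fin p, (i0, k) ∈ ({i0} ×ˢ Finset.univ : Finset (Fin n × Fin p)) :=
            fun k => Finset.mem_product.mpr ⟨Finset.mem_singleton_self i0, Finset.mem_univ k⟩
          have hmemT : ∀ (i : {x // x ∈ s0}) (k : Fin p),
              (i.1, k) ∈ (s0 ×ˢ Finset.univ : Finset (Fin n × Fin p)) :=
            fun i k => Finset.mem_product.mpr ⟨i.2, Finset.mem_univ k⟩
          have hST : Disjoint ({i0} ×ˢ Finset.univ : Finset (Fin n × Fin p))
              (s0 ×ˢ Finset.univ) := by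
            rw [Finset.disjoint_left]
            rintro ⟨i1, k1⟩ hS hT
            rw [Finset.mem_product] at hS hT
            rw [Finset.mem_singleton] at hS
            exact hnm (hS.1 ▸ hT.1)
          have base := hIndep.indepFun_finset _ _ hST hameas
          set φ : (∀ _ : {x // x ∈ ({i0} ×ˢ Finset.univ : Finset (Fin n × Fin p))}, ℝ) → ℝ :=
            fun v => (1 / (q * (1 - q))) * (v ⟨(i0, j), hmemS j⟩ - q) *
              (∑ k, (v ⟨(i0, k), hmemS k⟩ - q) * u k) - u j with hφ_def
          set ψ : (∀ _ : {x // x ∈ (s0 ×ˢ Finset.univ : Finset (Fin n × Fin p))}, ℝ) → ℝ :=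
            fun v => ∑ i ∈ s0.attach, ((1 / (q * (1 - q))) * (v ⟨(i.1, j), hmemT i j⟩ - q) *
              (∑ k, (v ⟨(i.1, k), hmemT i k⟩ - q) * u k) - u j) with hψ_def
          have hφmeas : Measurable φ := by
            apply Measurable.sub _ measurable_const
            exact (((measurable_pi_apply _).sub measurable_const).const_mul _).mul
              (Finset.measurable_sum _ fun k _ =>
                ((measurable_pi_apply _).sub measurable_const).mul_const _)
          have hψmeas : Measurable ψ := Finset.measurable_sum _ fun i _ => by
            apply Measurable.sub _ measurable_const
            exact (((measurable_pi_apply _).sub measurable_const).const_mul _).mul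
              (Finset.measurable_sum _ fun k _ =>
                ((measurable_pi_apply _).sub measurable_const).mul_const _)
          have hcomp := base.comp hφmeas hψmeas
          have he1 : (φ ∘ fun ω (x : {x // x ∈ ({i0} ×ˢ Finset.univ :
              Finset (Fin n × Fin p))}) => a x ω) = W i0 j := by
            funext ω
            simp only [Function.comp_apply, hφ_def, hW_def]
          have he2 : (ψ ∘ fun ω (x : {x // x ∈ (s0 ×ˢ Finset.univ :
              Finset (Fin n × Fin p))}) => a x ω) = fun ω => ∑ i ∈ s0, W i j ω := by
            funext ω
            simp only [Function.comp_apply, hψ_def]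
            calc ∑ i ∈ s0.attach, ((1 / (q * (1 - q))) * (a (i.1, j) ω - q) *
                  (∑ k, (a (i.1, k) ω - q) * u k) - u j)
                = ∑ i ∈ s0.attach, W i.1 j ω :=
                  Finset.sum_congr rfl fun i _ => by simp only [hW_def]
              _ = ∑ i ∈ s0, W i j ω := Finset.sum_attach s0 (fun i => W i j ω)
          rw [he1, he2] at hcomp
          simp only [Finset.sum_insert hnm]
          have hmadd : mgf (fun ω => W i0 j ω + ∑ i ∈ s0, W i j ω) Pr l
              = mgf (W i0 j) Pr l * mgf (fun ω => ∑ i ∈ s0, W i j ω) Pr l := by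
            have := IndepFun.mgf_add' (t := l) hcomp ((hWmeas i0 j).aestronglyMeasurable)
              ((Finset.measurable_sum _ fun i _ => hWmeas i j).aestronglyMeasurable)
            exact this
          rw [hmadd]
          calc mgf (W i0 j) Pr l * mgf (fun ω => ∑ i ∈ s0, W i j ω) Pr l
              ≤ Real.exp (l ^ 2 * c ^ 2 * U / 2) *
                Real.exp ((s0.card : ℝ) * (l ^ 2 * c ^ 2 * U / 2)) :=
                mul_le_mul (hmgfW i0 j l) ih mgf_nonneg (Real.exp_nonneg _)
            _ = Real.exp (((insert i0 s0).card : ℝ) * (l ^ 2 * c ^ 2 * U / 2)) := by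
                rw [← Real.exp_add, Finset.card_insert_of_notMem hnm]
                congr 1
                push_cast
                ring
    have habs1 : ∀ᵐ ω ∂Pr, ∀ (i : Fin n) (j : Fin p),
        |W i j ω| ≤ c * (∑ k, |u k|) + (∑ k, |u k|) := by
      filter_upwards [hae] with ω hω
      intro i j
      have haq : ∀ k : Fin p, |a (i, k) ω - q| ≤ 1 := by
        intro k
        rcases hω (i, k) with h | h <;> rw [h] <;> rw [abs_le] <;> constructor <;> linarith
      have hsum : |∑ k, (a (i, k) ω - q) * u k| ≤ ∑ k, |u k| := by
        refine le_trans (Finset.abs_sum_le_sum_abs _ _) (Finset.sum_le_sum fun k _ => ?_)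
        rw [abs_mul]
        calc |a (i, k) ω - q| * |u k| ≤ 1 * |u k| :=
              mul_le_mul_of_nonneg_right (haq k) (abs_nonneg _)
          _ = |u k| := one_mul _
      have huj : |u j| ≤ ∑ k, |u k| :=
        Finset.single_le_sum (f := fun k => |u k|) (fun k _ => abs_nonneg _) (Finset.mem_univ j)
      have hW1 : |W i j ω| ≤ c * |a (i, j) ω - q| * |∑ k, (a (i, k) ω - q) * u k| + |u j| := by
        calc |W i j ω| ≤ |(1 / (q * (1 - q))) * (a (i, j) ω - q) *
              (∑ k, (a (i, k) ω - q) * u k)| + |u j| := abs_sub _ _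
          _ = c * |a (i, j) ω - q| * |∑ k, (a (i, k) ω - q) * u k| + |u j| := by
              rw [abs_mul, abs_mul]
              congr 2
              rw [abs_of_pos hc]
      calc |W i j ω| ≤ c * |a (i, j) ω - q| * |∑ k, (a (i, k) ω - q) * u k| + |u j| := hW1
        _ ≤ c * 1 * (∑ k, |u k|) + (∑ k, |u k|) := by
            have h0 : 0 ≤ ∑ k, |u k| := Finset.sum_nonneg fun k _ => abs_nonneg _
            have hmm : c * |a (i, j) ω - q| ≤ c * 1 :=
              mul_le_mul_of_nonneg_left (haq j) hc.le
            exact add_le_add (mul_le_mul hmm hsum (abs_nonneg _) (by linarith)) huj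
        _ = c * (∑ k, |u k|) + (∑ k, |u k|) := by ring
    have habsS : ∀ᵐ ω ∂Pr, ∀ j : Fin p,
        |S j ω| ≤ (n : ℝ) * (c * (∑ k, |u k|) + (∑ k, |u k|)) := by
      filter_upwards [habs1] with ω hω
      intro j
      calc |S j ω| ≤ ∑ i : Fin n, |W i j ω| := Finset.abs_sum_le_sum_abs _ _
        _ ≤ ∑ _i : Fin n, (c * (∑ k, |u k|) + (∑ k, |u k|)) :=
            Finset.sum_le_sum fun i _ => hω i j
        _ = (n : ℝ) * (c * (∑ k, |u k|) + (∑ k, |u k|)) := by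
            rw [Finset.sum_const, Finset.card_univ, Fintype.card_fin, nsmul_eq_mul]
    have hint : ∀ (j : Fin p) (l : ℝ), Integrable (fun ω => Real.exp (l * S j ω)) Pr := by
      intro j l
      apply Integrable.mono'
        (integrable_const (Real.exp (|l| * ((n : ℝ) * (c * (∑ k, |u k|) + (∑ k, |u k|))))))
        (((hSmeas j).const_mul l).exp.aestronglyMeasurable)
      filter_upwards [habsS] with ω hω
      rw [Real.norm_eq_abs, Real.abs_exp]
      apply Real.exp_le_exp.mpr
      calc l * S j ω ≤ |l * S j ω| := le_abs_self _
        _ = |l| * |S j ω| := abs_mul _ _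
        _ ≤ |l| * ((n : ℝ) * (c * (∑ k, |u k|) + (∑ k, |u k|))) :=
            mul_le_mul_of_nonneg_left (hω j) (abs_nonneg _)
    have htail : ∀ j : Fin p,
        Pr {ω | Real.sqrt n * tval ≤ S j ω} + Pr {ω | S j ω ≤ -(Real.sqrt n * tval)}
          ≤ ENNReal.ofReal (2 * Real.exp (-18 * Real.log p)) := by
      intro j
      have hsU : 0 < Real.sqrt U := Real.sqrt_pos.mpr hUpos
      have hsl : 0 < Real.sqrt (Real.log p) := Real.sqrt_pos.mpr hlogp
      set l0 : ℝ := C * Real.sqrt (Real.log p) / (Real.sqrt n * c ^ 2 * Real.sqrt U)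
        with hl0_def
      have hl0 : 0 < l0 := by
        rw [hl0_def, hC_def]
        positivity
      have hexp_eq : -l0 * (Real.sqrt n * tval) + (n : ℝ) * (l0 ^ 2 * c ^ 2 * U / 2)
          = -18 * Real.log p := by
        have hsU2 : Real.sqrt U ^ 2 = U := Real.sq_sqrt hUpos.le
        have hsn2 : Real.sqrt n ^ 2 = (n : ℝ) := Real.sq_sqrt hn0.le
        have hsl2 : Real.sqrt (Real.log p) ^ 2 = Real.log p := Real.sq_sqrt hlogp.le
        rw [hl0_def, htval_def, hC_def]
        have hgen : ∀ N UU L x y z cc : ℝ, x ≠ 0 → y ≠ 0 → cc ≠ 0 →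
            N = x ^ 2 → UU = y ^ 2 → L = z ^ 2 →
            -(6 * cc * z / (x * cc ^ 2 * y)) * (x * (6 * cc * y * z))
              + N * ((6 * cc * z / (x * cc ^ 2 * y)) ^ 2 * cc ^ 2 * UU / 2) = -18 * L := by
          intro N UU L x y z cc hx hy hcc hN hUU hL
          subst hN; subst hUU; subst hL
          field_simp
          ring
        exact hgen (n : ℝ) U (Real.log p) (Real.sqrt n) (Real.sqrt U)
          (Real.sqrt (Real.log p)) c hrn.ne' hsU.ne' hc.ne' hsn2.symm hsU2.symm hsl2.symm
      have hmono : ∀ l : ℝ, mgf (S j) Pr l ≤ Real.exp ((n : ℝ) * (l ^ 2 * c ^ 2 * U / 2)) := by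
        intro l
        have h := hmgfS j l Finset.univ
        rw [Finset.card_univ, Fintype.card_fin] at h
        exact h
      have htail1 : (Pr {ω | Real.sqrt n * tval ≤ S j ω}).toReal
          ≤ Real.exp (-18 * Real.log p) := by
        calc (Pr {ω | Real.sqrt n * tval ≤ S j ω}).toReal
            ≤ Real.exp (-l0 * (Real.sqrt n * tval)) * mgf (S j) Pr l0 :=
              measure_ge_le_exp_mul_mgf (Real.sqrt n * tval) hl0.le (hint j l0)
          _ ≤ Real.exp (-l0 * (Real.sqrt n * tval)) *
              Real.exp ((n : ℝ) * (l0 ^ 2 * c ^ 2 * U / 2)) :=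
              mul_le_mul_of_nonneg_left (hmono l0) (Real.exp_nonneg _)
          _ = Real.exp (-18 * Real.log p) := by rw [← Real.exp_add, hexp_eq]
      have htail2 : (Pr {ω | S j ω ≤ -(Real.sqrt n * tval)}).toReal
          ≤ Real.exp (-18 * Real.log p) := by
        calc (Pr {ω | S j ω ≤ -(Real.sqrt n * tval)}).toReal
            ≤ Real.exp (-(-l0) * -(Real.sqrt n * tval)) * mgf (S j) Pr (-l0) :=
              measure_le_le_exp_mul_mgf (-(Real.sqrt n * tval)) (neg_nonpos.mpr hl0.le)
                (hint j (-l0))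
          _ ≤ Real.exp (-(-l0) * -(Real.sqrt n * tval)) *
              Real.exp ((n : ℝ) * ((-l0) ^ 2 * c ^ 2 * U / 2)) :=
              mul_le_mul_of_nonneg_left (hmono (-l0)) (Real.exp_nonneg _)
          _ = Real.exp (-18 * Real.log p) := by
              rw [← Real.exp_add, show -(-l0) * -(Real.sqrt n * tval) = -l0 * (Real.sqrt n * tval)
                by ring, show (-l0) ^ 2 = l0 ^ 2 by ring, hexp_eq]
      rw [← ENNReal.ofReal_toReal (measure_ne_top Pr {ω | Real.sqrt n * tval ≤ S j ω}),
        ← ENNReal.ofReal_toReal (measure_ne_top Pr {ω | S j ω ≤ -(Real.sqrt n * tval)})]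
      calc ENNReal.ofReal (Pr {ω | Real.sqrt n * tval ≤ S j ω}).toReal
            + ENNReal.ofReal (Pr {ω | S j ω ≤ -(Real.sqrt n * tval)}).toReal
          ≤ ENNReal.ofReal (Real.exp (-18 * Real.log p))
            + ENNReal.ofReal (Real.exp (-18 * Real.log p)) :=
            add_le_add (ENNReal.ofReal_le_ofReal htail1) (ENNReal.ofReal_le_ofReal htail2)
        _ = ENNReal.ofReal (2 * Real.exp (-18 * Real.log p)) := by
            rw [← ENNReal.ofReal_add (Real.exp_nonneg _) (Real.exp_nonneg _)]
            congr 1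
            ring
    have hcompl : Pr {ω | ∀ j, |Δ j ω| ≤ tval}ᶜ ≤ ENNReal.ofReal (((p : ℝ) ^ 3)⁻¹) := by
      have hsub : {ω | ∀ j, |Δ j ω| ≤ tval}ᶜ ⊆
          ⋃ j : Fin p, ({ω | Real.sqrt n * tval ≤ S j ω} ∪
            {ω | S j ω ≤ -(Real.sqrt n * tval)}) := by
        intro ω hω
        simp only [Set.mem_compl_iff, Set.mem_setOf_eq, not_forall, not_le] at hω
        obtain ⟨j, hj⟩ := hω
        have hΔS : Δ j ω = (1 / Real.sqrt n) * S j ω := hΔ j ω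
        have hSval : |S j ω| = Real.sqrt n * |Δ j ω| := by
          rw [hΔS, abs_mul, abs_of_nonneg (by positivity : (0:ℝ) ≤ 1 / Real.sqrt n)]
          field_simp
        have hSbig : Real.sqrt n * tval ≤ |S j ω| := by
          rw [hSval]
          exact mul_le_mul_of_nonneg_left hj.le hrn.le
        simp only [Set.mem_iUnion, Set.mem_union, Set.mem_setOf_eq]
        refine ⟨j, ?_⟩
        rcases abs_cases (S j ω) with ⟨he, _⟩ | ⟨he, _⟩
        · exact Or.inl (he ▸ hSbig)
        · exact Or.inr (by rw [he] at hSbig; linarith)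
      calc Pr {ω | ∀ j, |Δ j ω| ≤ tval}ᶜ
          ≤ Pr (⋃ j : Fin p, ({ω | Real.sqrt n * tval ≤ S j ω} ∪
              {ω | S j ω ≤ -(Real.sqrt n * tval)})) := measure_mono hsub
        _ ≤ ∑' j : Fin p, Pr ({ω | Real.sqrt n * tval ≤ S j ω} ∪
              {ω | S j ω ≤ -(Real.sqrt n * tval)}) := measure_iUnion_le _
        _ ≤ ∑' j : Fin p, ENNReal.ofReal (2 * Real.exp (-18 * Real.log p)) :=
            ENNReal.tsum_le_tsum fun j => le_trans (measure_union_le _ _) (htail j)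
        _ = (p : ℝ≥0∞) * ENNReal.ofReal (2 * Real.exp (-18 * Real.log p)) := by
            rw [tsum_fintype]
            simp [Finset.sum_const, Finset.card_univ, nsmul_eq_mul]
        _ ≤ ENNReal.ofReal (((p : ℝ) ^ 3)⁻¹) := by
            rw [← ENNReal.ofReal_natCast p, ← ENNReal.ofReal_mul (by positivity)]
            apply ENNReal.ofReal_le_ofReal
            have hexp : Real.exp (-18 * Real.log p) = ((p : ℝ) ^ (18 : ℕ))⁻¹ := by
              rw [neg_mul, Real.exp_neg]
              congr 1
              rw [show (18 : ℝ) * Real.log p = ((18 : ℕ) : ℝ) * Real.log p by norm_num,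
                Real.exp_nat_mul, Real.exp_log hp0]
            rw [hexp]
            have hp2 : (2 : ℝ) ≤ (p : ℝ) := by exact_mod_cast hp
            have h18 : (0 : ℝ) < (p : ℝ) ^ (18 : ℕ) := by positivity
            have heq : (p : ℝ) * (2 * ((p : ℝ) ^ (18 : ℕ))⁻¹) = ((p : ℝ) * 2) / (p : ℝ) ^ (18 : ℕ) := by
              ring
            rw [heq, div_le_iff₀ h18]
            have hpow : ((p : ℝ) ^ 3)⁻¹ * (p : ℝ) ^ (18 : ℕ) = (p : ℝ) ^ (15 : ℕ) := by
              have : (p : ℝ) ^ (18 : ℕ) = (p : ℝ) ^ 3 * (p : ℝ) ^ (15 : ℕ) := by ring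
              rw [this]
              field_simp
            rw [hpow]
            have h14 : (2 : ℝ) ^ (14 : ℕ) ≤ (p : ℝ) ^ (14 : ℕ) :=
              pow_le_pow_left₀ (by norm_num) hp2 14
            have : (p : ℝ) ^ (15 : ℕ) = (p : ℝ) ^ (14 : ℕ) * (p : ℝ) := by ring
            nlinarith [h14, hp0.le, hp2]
    have h1 : Pr {ω | ∀ j, |Δ j ω| ≤ tval} = 1 - Pr {ω | ∀ j, |Δ j ω| ≤ tval}ᶜ :=
      ENNReal.eq_sub_of_add_eq (measure_ne_top _ _) (prob_add_prob_compl hEmeas)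
    have hxle : ((p : ℝ) ^ 3)⁻¹ ≤ 1 := by
      rw [inv_le_one_iff₀]
      right
      have hp2 : (2 : ℝ) ≤ (p : ℝ) := by exact_mod_cast hp
      nlinarith [pow_le_pow_left₀ (by norm_num : (0:ℝ) ≤ 1) (by linarith : (1:ℝ) ≤ (p:ℝ)) 3]
    calc ENNReal.ofReal (1 - ((p : ℝ) ^ 3)⁻¹)
        ≤ 1 - ENNReal.ofReal (((p : ℝ) ^ 3)⁻¹) := by
          apply ENNReal.le_sub_of_add_le_right ENNReal.ofReal_ne_top
          rw [← ENNReal.ofReal_add (by linarith) (by positivity)]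
          norm_num
      _ ≤ 1 - Pr {ω | ∀ j, |Δ j ω| ≤ tval}ᶜ := tsub_le_tsub_left hcompl 1
      _ = Pr {ω | ∀ j, |Δ j ω| ≤ tval} := h1.symm
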